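/- arXiv:1801.05423 — 4 statements merged into one kernel-verified Lean document; each statement's English description precedes it below -/
import Mathlib

section
/- With p_n, q_n as above, for all n ≥ 1 we have 0 < p_n/q_n - √2 < 1/(2√2 · q_n^2). -/
/-!
Write `p_n + q_n √2 = (1 + √2)^(2^n)`; the recursion squares this unit of `ℤ[√2]`, so the norm
`p_n^2 - 2 q_n^2` is `-1` at `n = 0` and `1` from then on. For a solution of `p^2 - d q^2 = 1`,
`p/q - √d = 1 / (q (p + √d q))`, which is positive and, since `p > √d q`, below `1 / (2 √d q^2)`.
-/

theorem div_sub_sqrt_eq_one_div_of_sq_sub_mul_sq_eq_one {d p q : ℝ} (hd : 0 ≤ d) (hq : q ≠ 0)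
    (h : p ^ 2 - d * q ^ 2 = 1) :
    p / q - √d = 1 / (q * (p + √d * q)) := by
  have hs : √d ^ 2 = d := Real.sq_sqrt hd
  have hconj : (p - √d * q) * (p + √d * q) = 1 := by linear_combination h - q ^ 2 * hs
  have hsum : p + √d * q ≠ 0 := right_ne_zero_of_mul (hconj.symm ▸ one_ne_zero)
  rw [eq_div_iff (mul_ne_zero hq hsum)]
  field_simp
  linear_combination hconj

theorem sqrt_lt_div_and_div_sub_sqrt_lt_of_sq_sub_mul_sq_eq_one {d p q : ℝ} (hd : 0 < d)
    (hp : 0 ≤ p) (hq : 0 < q) (h : p ^ 2 - d * q ^ 2 = 1) :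
    0 < p / q - √d ∧ p / q - √d < 1 / (2 * √d * q ^ 2) := by
  have hs : √d ^ 2 = d := Real.sq_sqrt hd.le
  have hs0 : 0 < √d := Real.sqrt_pos.mpr hd
  have hlt : √d * q < p := by nlinarith [mul_pos hs0 hq]
  rw [div_sub_sqrt_eq_one_div_of_sq_sub_mul_sq_eq_one hd.le hq.ne' h]
  refine ⟨by positivity, one_div_lt_one_div_of_lt (by positivity) ?_⟩
  calc 2 * √d * q ^ 2 = q * (√d * q + √d * q) := by ring
    _ < q * (p + √d * q) := by gcongr

theorem pos_and_pos_of_sq_add_two_mul_sq (p q : ℕ → ℕ) (hp0 : p 0 = 1) (hq0 : q 0 = 1)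
    (hp : ∀ n, p (n + 1) = (p n) ^ 2 + 2 * (q n) ^ 2)
    (hq : ∀ n, q (n + 1) = 2 * (p n) * (q n)) (n : ℕ) :
    0 < p n ∧ 0 < q n := by
  induction n with
  | zero => simp [hp0, hq0]
  | succ n ih =>
    obtain ⟨hpn, hqn⟩ := ih
    rw [hp, hq]
    exact ⟨by positivity, by positivity⟩

theorem sq_sub_two_mul_sq_eq_one_of_sq_add_two_mul_sq (p q : ℕ → ℕ) (hp0 : p 0 = 1)
    (hq0 : q 0 = 1) (hp : ∀ n, p (n + 1) = (p n) ^ 2 + 2 * (q n) ^ 2)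
    (hq : ∀ n, q (n + 1) = 2 * (p n) * (q n)) {n : ℕ} (hn : 1 ≤ n) :
    (p n : ℝ) ^ 2 - 2 * (q n : ℝ) ^ 2 = 1 := by
  have hsquare : ∀ k, (p (k + 1) : ℝ) ^ 2 - 2 * (q (k + 1) : ℝ) ^ 2
      = ((p k : ℝ) ^ 2 - 2 * (q k : ℝ) ^ 2) ^ 2 := by
    intro k
    rw [hp, hq]
    push_cast
    ring
  induction n, hn using Nat.le_induction with
  | base => rw [hsquare, hp0, hq0]; norm_num
  | succ k _ ih => rw [hsquare, ih]; norm_num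

theorem stmt_5 (p q : ℕ → ℕ) (hp0 : p 0 = 1) (hq0 : q 0 = 1)
    (hp : ∀ n, p (n + 1) = (p n) ^ 2 + 2 * (q n) ^ 2)
    (hq : ∀ n, q (n + 1) = 2 * (p n) * (q n)) :
    ∀ n, 1 ≤ n →
      0 < (p n : ℝ) / (q n : ℝ) - Real.sqrt 2 ∧
        (p n : ℝ) / (q n : ℝ) - Real.sqrt 2 < 1 / (2 * Real.sqrt 2 * (q n : ℝ) ^ 2) := by
  intro n hn
  have hqn : 0 < q n := (pos_and_pos_of_sq_add_two_mul_sq p q hp0 hq0 hp hq n).2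
  exact sqrt_lt_div_and_div_sub_sqrt_lt_of_sq_sub_mul_sq_eq_one two_pos (Nat.cast_nonneg _)
    (Nat.cast_pos.mpr hqn) (sq_sub_two_mul_sq_eq_one_of_sq_add_two_mul_sq p q hp0 hq0 hp hq hn)
end

section
/- Define the finite continued fraction c_k = 1 + [2, 2, ..., 2] with k twos, i.e., c_0 = 1 and c_{k+1} = 1 + 1/(1 + c_k). Then the Newton iterate x_n (with x_0 = 1, x_{n+1} = (x_n + 2/x_n)/2, over ℚ) equals c_{2^n - 1} for all n. -/
/-!
Both the Newton map `N a = (a + d / a) / 2` and the continued-fraction step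
`f t = 1 + (d - 1) / (1 + t) = (t + d) / (t + 1)` fix `±√d`. In the coordinate
`s = (t - √d) / (t + √d)` the map `N` becomes `s ↦ s ^ 2` and `f` becomes `s ↦ λ s` with
`λ = (1 - √d) / (1 + √d)`, so `f ∘ f ∘ N = N ∘ f`. Since `c₀ = 1` has coordinate `λ`,
`c_k` has coordinate `λ ^ (k + 1)`, hence `N (c_k) = c_{2k+1}`, and `n` Newton steps from `1`
land on `c_{2^n - 1}`.
-/

variable {K : Type*} [Field K]

def newtonSqrt (d a : K) : K := (a + d / a) / 2

def sqrtContFracStep (d t : K) : K := 1 + (d - 1) / (1 + t)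

lemma sqrtContFracStep_eq_div {d t : K} (ht : 1 + t ≠ 0) :
    sqrtContFracStep d t = (t + d) / (1 + t) := by
  unfold sqrtContFracStep
  field_simp
  ring

variable [LinearOrder K] [IsStrictOrderedRing K]

lemma newtonSqrt_pos {d a : K} (hd : 0 ≤ d) (ha : 0 < a) : 0 < newtonSqrt d a := by
  unfold newtonSqrt
  positivity

lemma sqrtContFracStep_pos {d t : K} (hd : 0 ≤ d) (ht : 0 < t) : 0 < sqrtContFracStep d t := by
  rw [sqrtContFracStep_eq_div (by positivity)]
  positivity

lemma sqrtContFracStep_sqrtContFracStep_newtonSqrt {d a : K} (hd : 0 ≤ d) (ha : 0 < a) :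
    sqrtContFracStep d (sqrtContFracStep d (newtonSqrt d a)) =
      newtonSqrt d (sqrtContFracStep d a) := by
  have hN := newtonSqrt_pos hd ha
  have hfN := sqrtContFracStep_pos hd hN
  rw [sqrtContFracStep_eq_div (by positivity), sqrtContFracStep_eq_div (by positivity),
    sqrtContFracStep_eq_div (by positivity)]
  unfold newtonSqrt
  field_simp
  ring

section Sequences

variable {d : K} {c x : ℕ → K}

lemma pos_of_sqrtContFrac (hd : 0 ≤ d) (hc0 : c 0 = 1)
    (hc : ∀ k, c (k + 1) = sqrtContFracStep d (c k)) (k : ℕ) : 0 < c k := by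
  induction k with
  | zero => simp [hc0]
  | succ k ih => simpa [hc] using sqrtContFracStep_pos hd ih

lemma sqrtContFrac_two_mul_add_one (hd : 0 ≤ d) (hc0 : c 0 = 1)
    (hc : ∀ k, c (k + 1) = sqrtContFracStep d (c k)) (k : ℕ) :
    c (2 * k + 1) = newtonSqrt d (c k) := by
  induction k with
  | zero =>
    rw [hc, hc0]
    simp only [sqrtContFracStep, newtonSqrt]
    ring
  | succ k ih =>
    rw [show 2 * (k + 1) + 1 = 2 * k + 1 + 1 + 1 by ring, hc, hc, ih, hc k,
      sqrtContFracStep_sqrtContFracStep_newtonSqrt hd (pos_of_sqrtContFrac hd hc0 hc k)]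

theorem newtonSqrt_iterate_eq_sqrtContFrac (hd : 0 ≤ d) (hc0 : c 0 = 1)
    (hc : ∀ k, c (k + 1) = sqrtContFracStep d (c k)) (hx0 : x 0 = 1)
    (hx : ∀ n, x (n + 1) = newtonSqrt d (x n)) (n : ℕ) : x n = c (2 ^ n - 1) := by
  induction n with
  | zero => simp [hx0, hc0]
  | succ n ih =>
    have hexp : 2 ^ (n + 1) - 1 = 2 * (2 ^ n - 1) + 1 := by
      have : 1 ≤ 2 ^ n := Nat.one_le_two_pow
      omega
    rw [hx, ih, hexp, sqrtContFrac_two_mul_add_one hd hc0 hc]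

end Sequences

theorem stmt_8 (c : ℕ → ℚ) (hc0 : c 0 = 1)
    (hc : ∀ k, c (k + 1) = 1 + 1 / (1 + c k))
    (x : ℕ → ℚ) (hx0 : x 0 = 1)
    (hx : ∀ n, x (n + 1) = (x n + 2 / x n) / 2) :
    ∀ n, x n = c (2 ^ n - 1) :=
  newtonSqrt_iterate_eq_sqrtContFrac zero_le_two hc0
    (fun k => by rw [hc, sqrtContFracStep]; norm_num) hx0 hx
end

section
/- If a real number x ∈ (0,1) has a purely periodic orbit of period 2 under the Gauss map G(x) = frac(1/x), with G(x) ≠ x, then x is a quadratic irrational: it satisfies a quadratic equation with integer coefficients and is irrational. -/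
/-!
Write `y = G x`, `m = ⌊1/x⌋` and `n = ⌊1/y⌋`, both at least `1`. The two equations
`1/x = m + y` and `1/y = n + x` eliminate `y` to give `m x² + m n x - n = 0`, whose
discriminant `k² + 4k` (with `k = m n ≥ 1`) lies strictly between `k²` and `(k + 2)²` and
differs from `(k + 1)²`, so it is not a square and the root `x` is irrational.
-/

theorem irrational_of_quadratic_eq_zero_of_not_isSquare_discrim {a b c : ℤ} {x : ℝ}
    (hx : (a : ℝ) * x ^ 2 + b * x + c = 0) (hd : ¬IsSquare (discrim a b c)) : Irrational x := by
  rintro ⟨q, rfl⟩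
  have hq : (a : ℚ) * (q * q) + b * q + c = 0 := by
    exact_mod_cast (show (a : ℝ) * (q * q) + b * q + c = 0 by rw [← sq]; exact hx)
  refine hd (Rat.isSquare_intCast_iff.mp ⟨2 * a * q + b, ?_⟩)
  rw [show ((discrim a b c : ℤ) : ℚ) = discrim (a : ℚ) b c by simp [discrim],
    discrim_eq_sq_of_quadratic_eq_zero hq, sq]

theorem Int.not_isSquare_sq_add_four_mul {k : ℤ} (hk : 0 < k) : ¬IsSquare (k ^ 2 + 4 * k) := by
  rintro ⟨r, hr⟩
  rw [← abs_mul_abs_self] at hr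
  have hlo : k < |r| := by nlinarith [abs_nonneg r]
  have hhi : |r| < k + 2 := by nlinarith [abs_nonneg r]
  have hmid : |r| = k + 1 := by omega
  have : 2 * k = 1 := by rw [hmid] at hr; linear_combination hr
  omega

theorem one_le_floor_one_div {x : ℝ} (hx0 : 0 < x) (hx1 : x ≤ 1) : 1 ≤ ⌊1 / x⌋ :=
  Int.le_floor.2 (by rw [Int.cast_one, le_div_iff₀ hx0]; linarith)

theorem quadratic_eq_zero_of_two_cycle {x y m n : ℝ} (hx : x ≠ 0) (hy : y ≠ 0)
    (hxy : y = 1 / x - m) (hyx : x = 1 / y - n) : m * x ^ 2 + m * n * x - n = 0 := by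
  have h₁ : x * y = 1 - m * x := by rw [hxy]; field_simp
  have h₂ : y * x = 1 - n * y := by rw [hyx]; field_simp
  linear_combination (x + n) * h₁ - x * h₂

theorem stmt_10_general (G : ℝ → ℝ) (hG : ∀ y : ℝ, G y = 1 / y - ⌊1 / y⌋)
    (x : ℝ) (hx : x ∈ Set.Ioo (0 : ℝ) 1) (hGx : G x ∈ Set.Ioo (0 : ℝ) 1)
    (hper : G (G x) = x) :
    (∃ a b c : ℤ, a ≠ 0 ∧ (a : ℝ) * x ^ 2 + (b : ℝ) * x + (c : ℝ) = 0) ∧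
      Irrational x := by
  obtain ⟨hx0, hx1⟩ := hx
  obtain ⟨hy0, hy1⟩ := hGx
  set m := ⌊1 / x⌋
  set n := ⌊1 / G x⌋
  have hm : 1 ≤ m := one_le_floor_one_div hx0 hx1.le
  have hn : 1 ≤ n := one_le_floor_one_div hy0 hy1.le
  have hquad : (m : ℝ) * x ^ 2 + ((m * n : ℤ) : ℝ) * x + ((-n : ℤ) : ℝ) = 0 := by
    push_cast
    linear_combination quadratic_eq_zero_of_two_cycle hx0.ne' hy0.ne' (hG x)
      (hper ▸ hG (G x))
  refine ⟨⟨m, m * n, -n, by positivity, hquad⟩, ?_⟩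
  refine irrational_of_quadratic_eq_zero_of_not_isSquare_discrim hquad ?_
  have hdisc : discrim m (m * n) (-n) = (m * n) ^ 2 + 4 * (m * n) := by rw [discrim]; ring
  rw [hdisc]
  exact Int.not_isSquare_sq_add_four_mul (by positivity)

theorem stmt_10 (G : ℝ → ℝ) (hG : ∀ y : ℝ, G y = 1 / y - ⌊1 / y⌋)
    (x : ℝ) (hx : x ∈ Set.Ioo (0 : ℝ) 1) (hGx : G x ∈ Set.Ioo (0 : ℝ) 1)
    (hper : G (G x) = x) (hne : G x ≠ x) :
    (∃ a b c : ℤ, a ≠ 0 ∧ (a : ℝ) * x ^ 2 + (b : ℝ) * x + (c : ℝ) = 0) ∧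
      Irrational x :=
  stmt_10_general G hG x hx hGx hper
end

section
/- Suppose B is a formal power series with constant coefficient 1 satisfying the functional equation B(v + v^2)·(1+v)^2 = (1+2v)·B(v) (as formal power series, where B(v+v^2) denotes composition). Then the coefficients c_n of B satisfy c_0 = 1 and n·c_n = -∑_{i=1}^{n} C(n-i+2, i+1)·c_{n-i} for n ≥ 1; in particular c_1 = -1, c_2 = 3/2, c_3 = -8/3. -/
open PowerSeries

/-- The formal power series `B(v + v^2)`: since `(v + v^2)^k = v^k (1+v)^k`, the
coefficient of `v^n` in `B(v + v^2)` is `∑_{k ≤ n} c_k · C(k, n-k)`, where `c_k`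
is the `k`-th coefficient of `B`.  This is the substitution of `v + v^2` into `B`,
well-defined because `v + v^2` has zero constant term. -/
noncomputable def substVplusVsq (B : PowerSeries ℚ) : PowerSeries ℚ :=
  PowerSeries.mk fun n =>
    ∑ k ∈ Finset.range (n + 1), (PowerSeries.coeff k B) * (Nat.choose k (n - k) : ℚ)

/-!
Multiplying `B(v + v^2) = ∑ c_k v^k (1+v)^k` by `(1+v)^2` gives `∑ c_k v^k (1+v)^(k+2)`, whose
coefficients are again explicit binomial sums (Pascal's rule, applied twice). Comparing the
coefficient of `v^(n+1)` with that of `(1+2v) B` cancels `c_(n+1)`; what remains is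
`n c_n = -∑_(k<n) C(k+2, n+1-k) c_k`, which is the recurrence after the substitution `i = n - k`.
-/

open Finset

section

variable {R : Type*} [CommSemiring R]

/-- The power series `∑ c_k X^k (1+X)^(k+e)`. -/
noncomputable def sumXPowMulOneAddXPow (c : ℕ → R) (e : ℕ) : R⟦X⟧ :=
  mk fun m => ∑ k ∈ range (m + 1), c k * ((k + e).choose (m - k) : R)

theorem sumXPowMulOneAddXPow_mul_one_add_X (c : ℕ → R) (e : ℕ) :
    sumXPowMulOneAddXPow c e * (1 + X) = sumXPowMulOneAddXPow c (e + 1) := by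
  ext m
  rw [mul_add, mul_one, map_add]
  cases m with
  | zero => simp [sumXPowMulOneAddXPow]
  | succ n =>
    simp only [coeff_succ_mul_X, sumXPowMulOneAddXPow, coeff_mk]
    rw [sum_range_succ, sum_range_succ _ (n + 1), Nat.sub_self, Nat.choose_zero_right,
      Nat.choose_zero_right, add_right_comm, ← sum_add_distrib]
    congr 1
    refine sum_congr rfl fun k hk => ?_
    rw [Nat.succ_sub (Nat.le_of_lt_succ (mem_range.mp hk)), ← add_assoc, Nat.choose_succ_succ',
      Nat.cast_add, mul_add, add_comm]

theorem sum_range_choose_eq_sum_Icc (c : ℕ → R) (n : ℕ) :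
    ∑ k ∈ range n, c k * ((k + 2).choose (n + 1 - k) : R) =
      ∑ i ∈ Icc 1 n, ((n - i + 2).choose (i + 1) : R) * c (n - i) := by
  refine sum_nbij' (fun k => n - k) (fun i => n - i) ?_ ?_ ?_ ?_ ?_
  · intro k hk; simp only [mem_range] at hk; simp only [mem_Icc]; omega
  · intro i hi; simp only [mem_Icc] at hi; simp only [mem_range]; omega
  · intro k hk; simp only [mem_range] at hk; omega
  · intro i hi; simp only [mem_Icc] at hi; omega
  · intro k hk
    simp only [mem_range] at hk
    rw [mul_comm, Nat.sub_sub_self hk.le, show n + 1 - k = n - k + 1 by omega]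

end

theorem substVplusVsq_mul_one_add_X_sq (B : ℚ⟦X⟧) :
    substVplusVsq B * (1 + X) ^ 2 = sumXPowMulOneAddXPow (fun k => coeff k B) 2 := by
  have h : substVplusVsq B = sumXPowMulOneAddXPow (fun k => coeff k B) 0 := rfl
  rw [h, sq, ← mul_assoc, sumXPowMulOneAddXPow_mul_one_add_X,
    sumXPowMulOneAddXPow_mul_one_add_X]

theorem natCast_mul_coeff_eq_of_functional_eq {B : ℚ⟦X⟧}
    (hfun : substVplusVsq B * (1 + X) ^ 2 = (1 + 2 * X) * B) (n : ℕ) :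
    (n : ℚ) * coeff n B = -∑ k ∈ range n, coeff k B * ((k + 2).choose (n + 1 - k) : ℚ) := by
  have h := congrArg (coeff (n + 1)) hfun
  rw [substVplusVsq_mul_one_add_X_sq, mul_comm _ B, mul_add, mul_one, two_mul, mul_add,
    map_add, map_add, coeff_succ_mul_X] at h
  simp only [sumXPowMulOneAddXPow, coeff_mk, sum_range_succ, Nat.sub_self,
    Nat.choose_zero_right, show n + 1 - n = 1 by omega, Nat.choose_one_right] at h
  push_cast at h
  linear_combination h

theorem stmt_13 (B : PowerSeries ℚ) (hB0 : PowerSeries.coeff 0 B = 1)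
    (hfun : substVplusVsq B * (1 + PowerSeries.X) ^ 2
        = (1 + 2 * PowerSeries.X) * B) :
    (PowerSeries.coeff 0 B = 1 ∧
      ∀ n : ℕ, 1 ≤ n →
        (n : ℚ) * PowerSeries.coeff n B =
          -∑ i ∈ Finset.Icc 1 n,
            (Nat.choose (n - i + 2) (i + 1) : ℚ) * PowerSeries.coeff (n - i) B) ∧
    PowerSeries.coeff 1 B = -1 ∧
    PowerSeries.coeff 2 B = 3 / 2 ∧
    PowerSeries.coeff 3 B = -8 / 3 := by
  have hrec := natCast_mul_coeff_eq_of_functional_eq hfun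
  have h1 : coeff 1 B = -1 := by
    simpa [hB0] using hrec 1
  have h2 : coeff 2 B = 3 / 2 := by
    have h := hrec 2
    norm_num [sum_range_succ, hB0, h1] at h
    linarith
  have h3 : coeff 3 B = -8 / 3 := by
    have h := hrec 3
    norm_num [sum_range_succ, hB0, h1, h2, Nat.choose] at h
    linarith
  refine ⟨⟨hB0, fun n _ => ?_⟩, h1, h2, h3⟩
  rw [hrec, sum_range_choose_eq_sum_Icc (fun k => coeff k B)]
end
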